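/- Let g be the 3-dimensional real Lie algebra with basis x₁, x₂, x₃ and bracket ⁅x₁,x₂⁆ = x₃, ⁅x₂,x₃⁆ = 0, ⁅x₃,x₁⁆ = 0, and equip its dual g* (with dual basis ξ¹, ξ², ξ³) with the Lie bracket ⁅ξ¹,ξ²⁆ = ξ², ⁅ξ²,ξ³⁆ = 0, ⁅ξ³,ξ¹⁆ = −ξ³. Then there is no ℝ-linear map S : g* → End(g*) satisfying −ad*_x ∘ S(ξ) + S(ξ) ∘ ad*_x + S(ad*_x ξ) + ad*_{ad*_ξ x} = 0 for all x ∈ g and ξ ∈ g*. (Consequently the Atiyah class of the associated Lie pair (g ⋈ g*, g) does not vanish.) -/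

import Mathlib

/-! Since `x₃` is central, `ad*_{x₃} = 0`, so at `x = x₃`, `ξ = ξ³` the equation collapses to
`ad*_{ad*_{ξ³} x₃} = 0` whatever `S` is. But `ad*_{ξ³} x₃ = -x₁`, and `ad*_{x₁}` does not vanish:
`(ad*_{x₁} ξ³)(x₂) = ξ³(x₃) = 1`. -/

open Module

attribute [local instance 100] LieRing.ofAssociativeRing

/-- `adStar x` is the dual (transpose) of `ad x : g →ₗ[ℝ] g`,
so `adStar x ξ y = ξ ⁅x, y⁆`. -/
noncomputable def adStar (g : Type*) [LieRing g] [LieAlgebra ℝ g] :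
    g →ₗ[ℝ] Module.End ℝ (Module.Dual ℝ g) :=
  (Module.Dual.transpose (R := ℝ)) ∘ₗ (LieAlgebra.ad ℝ g).toLinearMap


section

variable {g : Type*} [LieRing g] [LieAlgebra ℝ g]

@[simp]
lemma adStar_apply_apply (x : g) (ξ : Module.Dual ℝ g) (y : g) :
    adStar g x ξ y = ξ ⁅x, y⁆ :=
  rfl

lemma adStar_eq_zero_of_forall_lie_basis_eq_zero {ι : Type*} (B : Basis ι ℝ g) {x : g}
    (hx : ∀ i, ⁅x, B i⁆ = 0) : adStar g x = 0 := by
  have had : LieAlgebra.ad ℝ g x = 0 := B.ext hx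
  ext ξ y
  simpa using congrArg ξ (LinearMap.congr_fun had y)

lemma adStar_astar_eq_zero_of_adStar_eq_zero
    {S : Module.Dual ℝ g →ₗ[ℝ] Module.End ℝ (Module.Dual ℝ g)}
    {astar : Module.Dual ℝ g →ₗ[ℝ] g →ₗ[ℝ] g} {x : g} {ξ : Module.Dual ℝ g}
    (hS : -(adStar g x * S ξ) + S ξ * adStar g x + S (adStar g x ξ)
      + adStar g (astar ξ x) = 0)
    (hx : adStar g x = 0) : adStar g (astar ξ x) = 0 := by
  simp only [hx, zero_mul, mul_zero, LinearMap.zero_apply, map_zero] at hS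
  -- `simp` cannot clear the remaining `-0 + 0 + 0`, whose instances come through
  -- `LieRing.ofAssociativeRing`; `abel` works up to defeq.
  rw [← hS]
  abel

end

theorem atiyah_class_3dim_example_nonvanishing_general
    (g : Type*) [LieRing g] [LieAlgebra ℝ g]
    (B : Basis (Fin 3) ℝ g)
    (hb1 : ⁅B 0, B 1⁆ = B 2) (hb2 : ⁅B 1, B 2⁆ = 0) (hb3 : ⁅B 2, B 0⁆ = 0)
    (br : Module.Dual ℝ g →ₗ[ℝ] Module.Dual ℝ g →ₗ[ℝ] Module.Dual ℝ g)
    (hskew : ∀ ξ, br ξ ξ = 0)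
    (hd2 : br (B.dualBasis 1) (B.dualBasis 2) = 0)
    (hd3 : br (B.dualBasis 2) (B.dualBasis 0) = -(B.dualBasis 2))
    (astar : Module.Dual ℝ g →ₗ[ℝ] g →ₗ[ℝ] g)
    (hastar : ∀ (ξ η : Module.Dual ℝ g) (x : g), η (astar ξ x) = br ξ η x) :
    ¬ ∃ S : Module.Dual ℝ g →ₗ[ℝ] Module.End ℝ (Module.Dual ℝ g),
        ∀ (x : g) (ξ : Module.Dual ℝ g),
          -(adStar g x * S ξ) + S ξ * adStar g x + S (adStar g x ξ)
            + adStar g (astar ξ x) = 0 := by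
  rintro ⟨S, hS⟩
  have hcentral : adStar g (B 2) = 0 := by
    refine adStar_eq_zero_of_forall_lie_basis_eq_zero B fun i => ?_
    fin_cases i <;> dsimp
    exacts [hb3, by rw [← lie_skew, hb2, neg_zero], lie_self _]
  have hastar_x₃ : astar (B.dualBasis 2) (B 2) = -B 0 := by
    refine B.ext_elem fun i => ?_
    rw [← B.dualBasis_apply, hastar]
    fin_cases i <;> dsimp
    · rw [hd3]; simp
    · rw [(LinearMap.IsAlt.eq_iff hskew).mp hd2]; simp
    · rw [hskew]; simp
  have hzero := adStar_astar_eq_zero_of_adStar_eq_zero (hS (B 2) (B.dualBasis 2)) hcentral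
  rw [hastar_x₃, map_neg, neg_eq_zero] at hzero
  simpa [hb1] using LinearMap.congr_fun (LinearMap.congr_fun hzero (B.dualBasis 2)) (B 1)

/-- Let `g` be the 3-dimensional real Lie algebra with basis `x₁, x₂, x₃` and bracket
`⁅x₁,x₂⁆ = x₃`, `⁅x₂,x₃⁆ = 0`, `⁅x₃,x₁⁆ = 0`, and equip its dual `g*` (with dual basis
`ξ¹, ξ², ξ³`) with the Lie bracket `⁅ξ¹,ξ²⁆ = ξ²`, `⁅ξ²,ξ³⁆ = 0`, `⁅ξ³,ξ¹⁆ = −ξ³`.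
Then there is no linear map `S : g* → End(g*)` satisfying the Atiyah cocycle equation
`−ad*_x ∘ S(ξ) + S(ξ) ∘ ad*_x + S(ad*_x ξ) + ad*_{ad*_ξ x} = 0` for all `x, ξ`.
(Consequently the Atiyah class of the Lie pair `(g ⋈ g*, g)` does not vanish.) -/
theorem atiyah_class_3dim_example_nonvanishing
    (g : Type*) [LieRing g] [LieAlgebra ℝ g]
    (B : Basis (Fin 3) ℝ g)
    (hb1 : ⁅B 0, B 1⁆ = B 2) (hb2 : ⁅B 1, B 2⁆ = 0) (hb3 : ⁅B 2, B 0⁆ = 0)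
    (br : Module.Dual ℝ g →ₗ[ℝ] Module.Dual ℝ g →ₗ[ℝ] Module.Dual ℝ g)
    (hskew : ∀ ξ, br ξ ξ = 0)
    (hjac : ∀ ξ η ζ, br ξ (br η ζ) = br (br ξ η) ζ + br η (br ξ ζ))
    (hd1 : br (B.dualBasis 0) (B.dualBasis 1) = B.dualBasis 1)
    (hd2 : br (B.dualBasis 1) (B.dualBasis 2) = 0)
    (hd3 : br (B.dualBasis 2) (B.dualBasis 0) = -(B.dualBasis 2))
    (astar : Module.Dual ℝ g →ₗ[ℝ] g →ₗ[ℝ] g)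
    (hastar : ∀ (ξ η : Module.Dual ℝ g) (x : g), η (astar ξ x) = br ξ η x) :
    ¬ ∃ S : Module.Dual ℝ g →ₗ[ℝ] Module.End ℝ (Module.Dual ℝ g),
        ∀ (x : g) (ξ : Module.Dual ℝ g),
          -(adStar g x * S ξ) + S ξ * adStar g x + S (adStar g x ξ)
            + adStar g (astar ξ x) = 0 :=
  atiyah_class_3dim_example_nonvanishing_general g B hb1 hb2 hb3 br hskew hd2 hd3 astar hastar
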